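/- Let A be a simple finite-dimensional algebra over a field F of characteristic zero with a comultiplication Δ such that the Drinfeld double D(A) is a direct sum A₁ ⊕ A₂ of two proper simple ideals, let φ₁, φ₂ : A* → A be the linear maps with f − φᵢ(f) ∈ Aᵢ for all f ∈ A*, and let ψ : A → A* be the linear bijection with a = −φ₁(ψ(a)) + φ₂(ψ(a)) for all a ∈ A. Then for all a, b ∈ A: ψ(ab) = ψ(a)⇽b = a⇁ψ(b). -/

import Mathlib

/-!
The projection `π` of `D(A)` onto `A₁` along `A₂` satisfies `π (x y) = π x · y = x · π y`,
because `A₁` and `A₂` are ideals. The relation `a = -φ₁ (ψ a) + φ₂ (ψ a)` says exactly that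
`π (a, 0) = (-φ₁ (ψ a), ψ a)`. Applying `π` to `(a b, 0) = (a, 0) (b, 0)` therefore gives
`(-φ₁ (ψ (a b)), ψ (a b)) = (-φ₁ (ψ a), ψ a) · (b, 0) = (a, 0) · (-φ₁ (ψ b), ψ b)`,
and the `A*`-components of the two right-hand sides are `ψ a ⇽ b` and `a ⇁ ψ b`.
-/

open TensorProduct

/-- `I` is a (two-sided) ideal for the product `prod`. -/
def IsIdealP {F M : Type*} [Field F] [AddCommGroup M] [Module F M]
    (prod : M → M → M) (I : Submodule F M) : Prop :=
  ∀ x ∈ I, ∀ y : M, prod x y ∈ I ∧ prod y x ∈ I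

/-- The ideal `I` is simple as an algebra with the restricted product. -/
def IsSimpleIdealP {F M : Type*} [Field F] [AddCommGroup M] [Module F M]
    (prod : M → M → M) (I : Submodule F M) : Prop :=
  (∃ x ∈ I, ∃ y ∈ I, prod x y ≠ 0) ∧
    ∀ J : Submodule F M, J ≤ I →
      (∀ x ∈ J, ∀ y ∈ I, prod x y ∈ J ∧ prod y x ∈ J) → J = ⊥ ∨ J = I

/-- The multiplication of the Drinfeld double `D(A) = A ⊕ A*` associated with the
bilinear product `mul` and the comultiplication `Δ`:
`(a + f)(b + g) = (ab + f⇀b + a↼g) + (fg + f⇽b + a⇁g)`. -/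
noncomputable def dmul {F A : Type*} [Field F] [AddCommGroup A] [Module F A]
    (mul : A →ₗ[F] A →ₗ[F] A) (Δ : A →ₗ[F] A ⊗[F] A)
    (p q : A × Module.Dual F A) : A × Module.Dual F A :=
  (mul p.1 q.1
      + TensorProduct.rid F A (LinearMap.lTensor A p.2 (Δ q.1))
      + TensorProduct.lid F A (LinearMap.rTensor A q.2 (Δ p.1)),
    Δ.dualMap (TensorProduct.dualDistrib F A A (p.2 ⊗ₜ[F] q.2))
      + p.2.comp (mul q.1)
      + q.2.comp (mul.flip p.1))

namespace Submodule

variable {R M : Type*} [Ring R] [AddCommGroup M] [Module R M] {p q : Submodule R M}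
  {prod : M → M → M}

theorem projection_apply_add_of_mem (hpq : IsCompl p q) {x y : M} (hx : x ∈ p) (hy : y ∈ q) :
    p.projection q hpq (x + y) = x := by
  rw [map_add, projection_apply_of_mem_left hpq hx, projection_apply_of_mem_right hpq hy, add_zero]

theorem projection_apply_prod_left (hpq : IsCompl p q)
    (hadd : ∀ x x' y, prod (x + x') y = prod x y + prod x' y)
    (hp : ∀ x ∈ p, ∀ y, prod x y ∈ p) (hq : ∀ x ∈ q, ∀ y, prod x y ∈ q) (x y : M) :
    p.projection q hpq (prod x y) = prod (p.projection q hpq x) y := by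
  set x₁ := p.projection q hpq x
  have hsplit : prod x y = prod x₁ y + prod (x - x₁) y := by
    rw [← hadd, add_sub_cancel]
  rw [hsplit, projection_apply_add_of_mem hpq (hp _ (projection_apply_mem hpq x) y)
    (hq _ (sub_projection_mem hpq x) y)]

theorem projection_apply_prod_right (hpq : IsCompl p q)
    (hadd : ∀ x y y', prod x (y + y') = prod x y + prod x y')
    (hp : ∀ y ∈ p, ∀ x, prod x y ∈ p) (hq : ∀ y ∈ q, ∀ x, prod x y ∈ q) (x y : M) :
    p.projection q hpq (prod x y) = prod x (p.projection q hpq y) :=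
  projection_apply_prod_left (prod := fun y x => prod x y) hpq (fun y y' x => hadd x y y') hp hq y x

end Submodule

section DrinfeldDouble

variable {F A : Type*} [Field F] [AddCommGroup A] [Module F A]
  (mul : A →ₗ[F] A →ₗ[F] A) (Δ : A →ₗ[F] A ⊗[F] A)

theorem dmul_add_left (p p' q : A × Module.Dual F A) :
    dmul mul Δ (p + p') q = dmul mul Δ p q + dmul mul Δ p' q := by
  simp only [dmul, Prod.fst_add, Prod.snd_add, map_add, LinearMap.add_apply,
    TensorProduct.add_tmul, LinearMap.lTensor_add, LinearMap.add_comp, LinearMap.comp_add,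
    Prod.mk_add_mk, Prod.mk.injEq]
  constructor <;> abel

theorem dmul_add_right (p q q' : A × Module.Dual F A) :
    dmul mul Δ p (q + q') = dmul mul Δ p q + dmul mul Δ p q' := by
  simp only [dmul, Prod.fst_add, Prod.snd_add, map_add, LinearMap.add_apply,
    TensorProduct.tmul_add, LinearMap.rTensor_add, LinearMap.add_comp, LinearMap.comp_add,
    Prod.mk_add_mk, Prod.mk.injEq]
  constructor <;> abel

theorem dmul_mk_zero_mk_zero (a b : A) :
    dmul mul Δ ((a, 0) : A × Module.Dual F A) (b, 0) = (mul a b, 0) := by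
  simp [dmul]

theorem snd_dmul_mk_zero (p : A × Module.Dual F A) (b : A) :
    (dmul mul Δ p (b, 0)).2 = p.2.comp (mul b) := by
  simp [dmul]

theorem snd_dmul_zero_mk (a : A) (q : A × Module.Dual F A) :
    (dmul mul Δ (a, 0) q).2 = q.2.comp (mul.flip a) := by
  simp [dmul]

end DrinfeldDouble

theorem stmt5_general {F A : Type*} [Field F] [AddCommGroup A] [Module F A]
    (mul : A →ₗ[F] A →ₗ[F] A)
    -- a comultiplication on `A`
    (Δ : A →ₗ[F] A ⊗[F] A)
    -- `D(A) = A₁ ⊕ A₂`, a direct sum of two proper simple ideals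
    (A₁ A₂ : Submodule F (A × Module.Dual F A))
    (hcompl : IsCompl A₁ A₂)
    (hid1 : IsIdealP (dmul mul Δ) A₁) (hid2 : IsIdealP (dmul mul Δ) A₂)
    -- the linear maps `φᵢ` with `f - φᵢ(f) ∈ Aᵢ` for all `f ∈ A*`
    (φ₁ φ₂ : Module.Dual F A →ₗ[F] A)
    (hφ1 : ∀ f : Module.Dual F A, ((-φ₁ f, f) : A × Module.Dual F A) ∈ A₁)
    (hφ2 : ∀ f : Module.Dual F A, ((-φ₂ f, f) : A × Module.Dual F A) ∈ A₂)
    -- the linear bijection `ψ` with `a = -φ₁(ψ a) + φ₂(ψ a)` for all `a ∈ A`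
    (ψ : A →ₗ[F] Module.Dual F A)
    (hψ : ∀ c : A, c = -φ₁ (ψ c) + φ₂ (ψ c))
    :
    ∀ c d : A,
      ψ (mul c d) = (ψ c).comp (mul d) ∧
      ψ (mul c d) = (ψ d).comp (mul.flip c) := by
  intro c d
  set π := A₁.projection A₂ hcompl
  have hπ : ∀ e : A, π (e, 0) = (-φ₁ (ψ e), ψ e) := by
    intro e
    have hv : ((φ₂ (ψ e), -ψ e) : A × Module.Dual F A) ∈ A₂ := by
      simpa using A₂.neg_mem (hφ2 (ψ e))
    have hsplit : ((e, 0) : A × Module.Dual F A) = (-φ₁ (ψ e), ψ e) + (φ₂ (ψ e), -ψ e) :=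
      Prod.ext (hψ e) (by simp)
    rw [hsplit, Submodule.projection_apply_add_of_mem hcompl (hφ1 (ψ e)) hv]
  have hπcd : π (dmul mul Δ (c, 0) (d, 0)) = (-φ₁ (ψ (mul c d)), ψ (mul c d)) := by
    rw [dmul_mk_zero_mk_zero, hπ]
  constructor
  · rw [Submodule.projection_apply_prod_left hcompl (dmul_add_left mul Δ)
      (fun x hx y => (hid1 x hx y).1) (fun x hx y => (hid2 x hx y).1), hπ] at hπcd
    exact (congrArg Prod.snd hπcd).symm.trans (snd_dmul_mk_zero mul Δ _ d)
  · rw [Submodule.projection_apply_prod_right hcompl (dmul_add_right mul Δ)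
      (fun y hy x => (hid1 y hy x).2) (fun y hy x => (hid2 y hy x).2), hπ] at hπcd
    exact (congrArg Prod.snd hπcd).symm.trans (snd_dmul_zero_mk mul Δ c _)

theorem stmt5 {F A : Type*} [Field F] [CharZero F] [AddCommGroup A] [Module F A]
    [FiniteDimensional F A] (mul : A →ₗ[F] A →ₗ[F] A)
    -- `A` is simple
    (hsimple : (∃ x y : A, mul x y ≠ 0) ∧
      ∀ I : Submodule F A, (∀ x ∈ I, ∀ y : A, mul x y ∈ I ∧ mul y x ∈ I) → I = ⊥ ∨ I = ⊤)
    -- a comultiplication on `A`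
    (Δ : A →ₗ[F] A ⊗[F] A)
    -- `D(A) = A₁ ⊕ A₂`, a direct sum of two proper simple ideals
    (A₁ A₂ : Submodule F (A × Module.Dual F A))
    (h1b : A₁ ≠ ⊥) (h1t : A₁ ≠ ⊤) (h2b : A₂ ≠ ⊥) (h2t : A₂ ≠ ⊤)
    (hcompl : IsCompl A₁ A₂)
    (hid1 : IsIdealP (dmul mul Δ) A₁) (hid2 : IsIdealP (dmul mul Δ) A₂)
    (hs1 : IsSimpleIdealP (dmul mul Δ) A₁) (hs2 : IsSimpleIdealP (dmul mul Δ) A₂)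
    -- the linear maps `φᵢ` with `f - φᵢ(f) ∈ Aᵢ` for all `f ∈ A*`
    (φ₁ φ₂ : Module.Dual F A →ₗ[F] A)
    (hφ1 : ∀ f : Module.Dual F A, ((-φ₁ f, f) : A × Module.Dual F A) ∈ A₁)
    (hφ2 : ∀ f : Module.Dual F A, ((-φ₂ f, f) : A × Module.Dual F A) ∈ A₂)
    -- the linear bijection `ψ` with `a = -φ₁(ψ a) + φ₂(ψ a)` for all `a ∈ A`
    (ψ : A →ₗ[F] Module.Dual F A) (hψbij : Function.Bijective ψ)
    (hψ : ∀ c : A, c = -φ₁ (ψ c) + φ₂ (ψ c))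
    :
    ∀ c d : A,
      ψ (mul c d) = (ψ c).comp (mul d) ∧
      ψ (mul c d) = (ψ d).comp (mul.flip c) :=
  stmt5_general mul Δ A₁ A₂ hcompl hid1 hid2 φ₁ φ₂ hφ1 hφ2 ψ hψ
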